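/- arXiv:2112.07785 — 4 statements merged into one kernel-verified Lean document; each statement's English description precedes it below -/
import Mathlib

section
/- Let A be a p×p real symmetric matrix with nonnegative entries, and let u, v ∈ ℝ^p with all entries strictly positive. Then −(1/2) uᵀAu ≤ −(1/2) ∑_{i,j} A_{ij} v_i v_j (1 + log(u_i u_j / (v_i v_j))). -/
/-! Since `log t ≤ t - 1`, each term satisfies `v_i v_j (1 + log (u_i u_j / (v_i v_j))) ≤ u_i u_j`;
weighting by `A_ij ≥ 0`, summing, and multiplying by `-1/2` gives the claim. -/

open Finset

lemma Real.mul_one_add_log_div_le {x y : ℝ} (hx : 0 < x) (hy : 0 < y) :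
    y * (1 + Real.log (x / y)) ≤ x := by
  have hlog : Real.log (x / y) ≤ x / y - 1 := Real.log_le_sub_one_of_pos (div_pos hx hy)
  calc y * (1 + Real.log (x / y)) ≤ y * (1 + (x / y - 1)) := by gcongr
    _ = x := by field_simp; ring

lemma sum_mul_one_add_log_le_sum {ι : Type*} [Fintype ι] (A : ι → ι → ℝ)
    (hA : ∀ i j, 0 ≤ A i j) {u v : ι → ℝ} (hu : ∀ i, 0 < u i) (hv : ∀ i, 0 < v i) :
    ∑ i, ∑ j, A i j * v i * v j * (1 + Real.log (u i * u j / (v i * v j))) ≤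
      ∑ i, ∑ j, A i j * u i * u j := by
  refine sum_le_sum fun i _ => sum_le_sum fun j _ => ?_
  have hterm := Real.mul_one_add_log_div_le (mul_pos (hu i) (hu j)) (mul_pos (hv i) (hv j))
  calc A i j * v i * v j * (1 + Real.log (u i * u j / (v i * v j)))
      = A i j * (v i * v j * (1 + Real.log (u i * u j / (v i * v j)))) := by ring
    _ ≤ A i j * (u i * u j) := mul_le_mul_of_nonneg_left hterm (hA i j)
    _ = A i j * u i * u j := by ring

theorem stmt_2_general (p : ℕ) (A : Matrix (Fin p) (Fin p) ℝ)
    (hA : ∀ i j, 0 ≤ A i j)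
    (u v : Fin p → ℝ) (hu : ∀ i, 0 < u i) (hv : ∀ i, 0 < v i) :
    -(1/2) * ∑ i, ∑ j, A i j * u i * u j ≤
      -(1/2) * ∑ i, ∑ j, A i j * v i * v j * (1 + Real.log (u i * u j / (v i * v j))) :=
  mul_le_mul_of_nonpos_left (sum_mul_one_add_log_le_sum A hA hu hv) (by norm_num)

theorem stmt_2 (p : ℕ) (A : Matrix (Fin p) (Fin p) ℝ)
    (hsym : A.IsSymm) (hA : ∀ i j, 0 ≤ A i j)
    (u v : Fin p → ℝ) (hu : ∀ i, 0 < u i) (hv : ∀ i, 0 < v i) :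
    -(1/2) * ∑ i, ∑ j, A i j * u i * u j ≤
      -(1/2) * ∑ i, ∑ j, A i j * v i * v j * (1 + Real.log (u i * u j / (v i * v j))) :=
  stmt_2_general p A hA u v hu hv
end

section
/- Fix reals a > 0, c ≥ 0, b ∈ ℝ, d ≥ 0, v⁰ ≥ 0, and v > 0. Define r₁ = v·(−(b+d) + √((b+d)² + 4ac))/(2a) and r₂ = v·(−(b−d) + √((b−d)² + 4ac))/(2a). Then the conditions r₁ > v⁰ and r₂ < v⁰ cannot hold simultaneously. -/
/-- `y ↦ √(y² + k)` is `1`-Lipschitz: with `s = √(x² + k)`, `t = √(y² + k)` we have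
`(t - s)(t + s) = (y - x)(y + x)` and `t + s ≥ |x| + |y|`. -/
theorem antitone_neg_add_sqrt_sq_add {k : ℝ} (hk : 0 ≤ k) :
    Antitone fun y : ℝ => -y + √(y ^ 2 + k) := by
  intro x y hxy
  have hsx : √(x ^ 2 + k) ^ 2 = x ^ 2 + k := Real.sq_sqrt (by positivity)
  have hsy : √(y ^ 2 + k) ^ 2 = y ^ 2 + k := Real.sq_sqrt (by positivity)
  have hx : |x| ≤ √(x ^ 2 + k) := Real.abs_le_sqrt (by linarith)
  have hy : |y| ≤ √(y ^ 2 + k) := Real.abs_le_sqrt (by linarith)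
  nlinarith [le_abs_self x, neg_abs_le x, le_abs_self y, neg_abs_le y,
    Real.sqrt_nonneg (x ^ 2 + k), Real.sqrt_nonneg (y ^ 2 + k)]

theorem stmt_5_general (a b c d v0 v : ℝ) (ha : 0 < a) (hc : 0 ≤ c) (hd : 0 ≤ d)
    (hv : 0 < v)
    (r1 r2 : ℝ)
    (hr1 : r1 = v * (-(b+d) + Real.sqrt ((b+d)^2 + 4*a*c)) / (2*a))
    (hr2 : r2 = v * (-(b-d) + Real.sqrt ((b-d)^2 + 4*a*c)) / (2*a)) :
    ¬(r1 > v0 ∧ r2 < v0) := by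
  rintro ⟨h1, h2⟩
  have hr : r1 ≤ r2 := by
    rw [hr1, hr2]
    gcongr v * ?_ / _
    exact antitone_neg_add_sqrt_sq_add (by positivity) (by linarith : b - d ≤ b + d)
  linarith

theorem stmt_5 (a b c d v0 v : ℝ) (ha : 0 < a) (hc : 0 ≤ c) (hd : 0 ≤ d)
    (hv0 : 0 ≤ v0) (hv : 0 < v)
    (r1 r2 : ℝ)
    (hr1 : r1 = v * (-(b+d) + Real.sqrt ((b+d)^2 + 4*a*c)) / (2*a))
    (hr2 : r2 = v * (-(b-d) + Real.sqrt ((b-d)^2 + 4*a*c)) / (2*a)) :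
    ¬(r1 > v0 ∧ r2 < v0) :=
  stmt_5_general a b c d v0 v ha hc hd hv r1 r2 hr1 hr2
end

section
/- Fix reals a > 0, c ≥ 0, b ∈ ℝ, d ≥ 0, v⁰ ≥ 0, ℓ > 0, and v > 0. Define G(u) = (1/2) a u²/v − c v log(u/v) + b u + d|u − v⁰| for u ∈ (0, ℓ]. Let r₁ = v(−(b+d)+√((b+d)²+4ac))/(2a) and r₂ = v(−(b−d)+√((b−d)²+4ac))/(2a). Then the unique minimizer of G over (0, ℓ] equals min{r₁, ℓ} if r₁ > v⁰, equals min{r₂, ℓ} if r₂ < v⁰, and equals min{v⁰, ℓ} otherwise (assuming c > 0 or the formal minimizer is positive). -/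
/-!
Write `F_e u = a u² / (2v) - c v log (u / v) + e u` (`branch a c v e`). Away from the kink at `v⁰`,
`G` is `F_{b+d} - d v⁰` (right of `v⁰`) or `F_{b-d} + d v⁰` (left of `v⁰`), and since `d ≥ 0`,
`G = max (F_{b+d} - d v⁰) (F_{b-d} + d v⁰)`. On `(0, ∞)` the derivative of `F_e` has the sign of
the quadratic `a u² + e v u - c v²`, whose positive root is `r_e` (`branchRoot a c v e`), so `F_e`
decreases on `(0, r_e]` and increases on `[r_e, ∞)`; as the quadratic grows with `e` for `u > 0`,
`r_{b+d} ≤ r_{b-d}`. Hence in each of the three cases `G` strictly decreases up to the claimed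
point `p` and strictly increases after it, so `min p ℓ` is the unique minimizer on `(0, ℓ]`.
-/

open Set

theorem isMinOn_and_eq_of_forall_ne_lt {α β : Type*} [Preorder β] {f : α → β} {s : Set α}
    {x : α} (hx : x ∈ s) (h : ∀ u ∈ s, u ≠ x → f x < f u) :
    IsMinOn f s x ∧ ∀ u ∈ s, IsMinOn f s u → u = x := by
  refine ⟨fun u hu => ?_, fun u hu hmin => ?_⟩
  · rcases eq_or_ne u x with rfl | hne
    · exact le_rfl
    · exact (h u hu hne).le
  · by_contra hne
    exact (h u hu hne).not_ge (hmin hx)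

theorem isMinOn_Ioc_min_of_strictAntiOn_of_strictMonoOn {α β : Type*} [LinearOrder α]
    [Preorder β] {f : α → β} {lo p l : α} (hp : lo < p) (hl : lo < l)
    (hanti : StrictAntiOn f (Ioc lo p)) (hmono : StrictMonoOn f (Ici p)) :
    min p l ∈ Ioc lo l ∧ IsMinOn f (Ioc lo l) (min p l) ∧
      ∀ u ∈ Ioc lo l, IsMinOn f (Ioc lo l) u → u = min p l := by
  have hmem : min p l ∈ Ioc lo l := ⟨lt_min hp hl, min_le_right p l⟩
  refine ⟨hmem, isMinOn_and_eq_of_forall_ne_lt hmem fun u hu hne => ?_⟩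
  rcases hne.lt_or_gt with hlt | hgt
  · exact hanti ⟨hu.1, hlt.le.trans (min_le_left p l)⟩ ⟨hmem.1, min_le_left p l⟩ hlt
  · rcases le_total p l with hpl | hlp
    · rw [min_eq_left hpl] at hgt ⊢
      exact hmono self_mem_Ici hgt.le hgt
    · exact absurd hu.2 (min_eq_right hlp ▸ hgt).not_ge

theorem StrictAntiOn.max {α β : Type*} [Preorder α] [LinearOrder β] {f g : α → β} {s : Set α}
    (hf : StrictAntiOn f s) (hg : StrictAntiOn g s) :
    StrictAntiOn (fun x => max (f x) (g x)) s :=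
  fun _ hx _ hy hxy => max_lt_max (hf hx hy hxy) (hg hx hy hxy)

theorem StrictMonoOn.max {α β : Type*} [Preorder α] [LinearOrder β] {f g : α → β} {s : Set α}
    (hf : StrictMonoOn f s) (hg : StrictMonoOn g s) :
    StrictMonoOn (fun x => max (f x) (g x)) s :=
  fun _ hx _ hy hxy => max_lt_max (hf hx hy hxy) (hg hx hy hxy)

noncomputable def branch (a c v e u : ℝ) : ℝ :=
  (1/2) * a * u^2 / v - c * v * Real.log (u / v) + e * u

noncomputable def branchRoot (a c v e : ℝ) : ℝ :=
  v * (-e + Real.sqrt (e^2 + 4*a*c)) / (2*a)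

noncomputable def objective (a c v b d v0 u : ℝ) : ℝ :=
  (1/2) * a * u^2 / v - c * v * Real.log (u / v) + b * u + d * |u - v0|

section Branch

variable {a c v : ℝ}

theorem hasDerivAt_branch (hv : 0 < v) (e : ℝ) {u : ℝ} (hu : 0 < u) :
    HasDerivAt (branch a c v e) ((a * u^2 + e * v * u - c * v^2) / (v * u)) u := by
  have hlog := ((hasDerivAt_id u).div_const v).log (div_pos hu hv).ne'
  have := ((((hasDerivAt_pow 2 u).const_mul ((1/2) * a)).div_const v).sub
    (hlog.const_mul (c * v))).add ((hasDerivAt_id u).const_mul e)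
  refine HasDerivAt.congr_deriv (f := branch a c v e) this ?_
  simp only [id]
  field_simp
  ring

theorem branchRoot_pos (ha : 0 < a) (hc : 0 < c) (hv : 0 < v) (e : ℝ) :
    0 < branchRoot a c v e := by
  have hs : e < Real.sqrt (e^2 + 4*a*c) := by
    calc e ≤ |e| := le_abs_self e
      _ = Real.sqrt (e^2) := (Real.sqrt_sq_eq_abs e).symm
      _ < Real.sqrt (e^2 + 4*a*c) := Real.sqrt_lt_sqrt (sq_nonneg e) (by linarith [mul_pos ha hc])
  unfold branchRoot
  exact div_pos (mul_pos hv (by linarith)) (by linarith)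

theorem branchRoot_isRoot (ha : 0 < a) (hc : 0 < c) (e : ℝ) :
    a * branchRoot a c v e ^ 2 + e * v * branchRoot a c v e - c * v^2 = 0 := by
  have hs := Real.sq_sqrt (show 0 ≤ e^2 + 4*a*c by positivity)
  unfold branchRoot
  generalize Real.sqrt (e^2 + 4*a*c) = s at hs ⊢
  field_simp
  linear_combination v^2 * hs

theorem branchRoot_mul_quadratic (ha : 0 < a) (hc : 0 < c) (e x : ℝ) :
    branchRoot a c v e * (a * x^2 + e * v * x - c * v^2) =
      (x - branchRoot a c v e) * (a * x * branchRoot a c v e + c * v^2) := by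
  linear_combination x * branchRoot_isRoot ha hc e

theorem quadratic_neg_of_lt_branchRoot (ha : 0 < a) (hc : 0 < c) (hv : 0 < v) {e x : ℝ}
    (hx : 0 < x) (h : x < branchRoot a c v e) :
    a * x^2 + e * v * x - c * v^2 < 0 := by
  have hr := branchRoot_pos ha hc hv e
  refine neg_of_mul_neg_right (a := branchRoot a c v e) ?_ hr.le
  rw [branchRoot_mul_quadratic ha hc]
  exact mul_neg_of_neg_of_pos (sub_neg.2 h) (by positivity)

theorem quadratic_pos_of_branchRoot_lt (ha : 0 < a) (hc : 0 < c) (hv : 0 < v) {e x : ℝ}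
    (h : branchRoot a c v e < x) :
    0 < a * x^2 + e * v * x - c * v^2 := by
  have hr := branchRoot_pos ha hc hv e
  refine pos_of_mul_pos_right (a := branchRoot a c v e) ?_ hr.le
  rw [branchRoot_mul_quadratic ha hc]
  exact mul_pos (sub_pos.2 h) (by have := hr.trans h; positivity)

theorem branchRoot_antitone (ha : 0 < a) (hc : 0 < c) (hv : 0 < v) :
    Antitone (branchRoot a c v) := by
  intro e e' he
  by_contra! hlt
  have hr := branchRoot_pos ha hc hv e
  have hneg := quadratic_neg_of_lt_branchRoot ha hc hv hr hlt
  nlinarith [branchRoot_isRoot (v := v) ha hc e, mul_nonneg (sub_nonneg.2 he) (mul_pos hv hr).le]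

theorem strictAntiOn_branch (ha : 0 < a) (hc : 0 < c) (hv : 0 < v) (e : ℝ) :
    StrictAntiOn (branch a c v e) (Ioc 0 (branchRoot a c v e)) := by
  refine strictAntiOn_of_hasDerivWithinAt_neg (convex_Ioc _ _)
    (fun x hx => (hasDerivAt_branch hv e hx.1).continuousAt.continuousWithinAt)
    (fun x hx => (hasDerivAt_branch hv e ?_).hasDerivWithinAt) fun x hx => ?_
  · exact (interior_subset hx : x ∈ Ioc _ _).1
  rw [interior_Ioc] at hx
  exact div_neg_of_neg_of_pos (quadratic_neg_of_lt_branchRoot ha hc hv hx.1 hx.2)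
    (mul_pos hv hx.1)

theorem strictMonoOn_branch (ha : 0 < a) (hc : 0 < c) (hv : 0 < v) (e : ℝ) :
    StrictMonoOn (branch a c v e) (Ici (branchRoot a c v e)) := by
  have hr := branchRoot_pos ha hc hv e
  refine strictMonoOn_of_hasDerivWithinAt_pos (convex_Ici _)
    (fun x hx => (hasDerivAt_branch hv e (hr.trans_le hx)).continuousAt.continuousWithinAt)
    (fun x hx => (hasDerivAt_branch hv e ?_).hasDerivWithinAt) fun x hx => ?_
  · exact hr.trans_le (interior_subset hx : x ∈ Ici _)
  rw [interior_Ici] at hx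
  exact div_pos (quadratic_pos_of_branchRoot_lt ha hc hv hx) (mul_pos hv (hr.trans hx))

end Branch

section Objective

variable {a c v b d v0 : ℝ}

theorem objective_eq_of_le {u : ℝ} (h : v0 ≤ u) :
    objective a c v b d v0 u = branch a c v (b + d) u + -(d * v0) := by
  rw [objective, branch, abs_of_nonneg (sub_nonneg.2 h)]
  ring

theorem objective_eq_of_ge {u : ℝ} (h : u ≤ v0) :
    objective a c v b d v0 u = branch a c v (b - d) u + d * v0 := by
  rw [objective, branch, abs_of_nonpos (sub_nonpos.2 h)]
  ring

theorem objective_eq_max (hd : 0 ≤ d) (u : ℝ) :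
    objective a c v b d v0 u =
      max (branch a c v (b + d) u + -(d * v0)) (branch a c v (b - d) u + d * v0) := by
  rcases le_total v0 u with h | h
  · rw [objective_eq_of_le h, max_eq_left]
    unfold branch
    nlinarith [mul_nonneg hd (sub_nonneg.2 h)]
  · rw [objective_eq_of_ge h, max_eq_right]
    unfold branch
    nlinarith [mul_nonneg hd (sub_nonneg.2 h)]

theorem strictAntiOn_and_strictMonoOn_objective_of_lt_branchRoot
    (ha : 0 < a) (hc : 0 < c) (hv : 0 < v) (hd : 0 ≤ d) (h : v0 < branchRoot a c v (b + d)) :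
    StrictAntiOn (objective a c v b d v0) (Ioc 0 (branchRoot a c v (b + d))) ∧
      StrictMonoOn (objective a c v b d v0) (Ici (branchRoot a c v (b + d))) := by
  have hroots := branchRoot_antitone ha hc hv (show b - d ≤ b + d by linarith)
  refine ⟨?_, ?_⟩
  · exact (((strictAntiOn_branch ha hc hv _).add_const _).max
      (((strictAntiOn_branch ha hc hv _).mono (Ioc_subset_Ioc_right hroots)).add_const _)).congr
      fun u _ => (objective_eq_max hd u).symm
  · exact ((strictMonoOn_branch ha hc hv _).add_const _).congr
      fun u hu => (objective_eq_of_le (h.le.trans hu)).symm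

theorem strictAntiOn_and_strictMonoOn_objective_of_branchRoot_lt
    (ha : 0 < a) (hc : 0 < c) (hv : 0 < v) (hd : 0 ≤ d) (h : branchRoot a c v (b - d) < v0) :
    StrictAntiOn (objective a c v b d v0) (Ioc 0 (branchRoot a c v (b - d))) ∧
      StrictMonoOn (objective a c v b d v0) (Ici (branchRoot a c v (b - d))) := by
  have hroots := branchRoot_antitone ha hc hv (show b - d ≤ b + d by linarith)
  refine ⟨?_, ?_⟩
  · exact ((strictAntiOn_branch ha hc hv _).add_const _).congr
      fun u hu => (objective_eq_of_ge (hu.2.trans h.le)).symm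
  · exact ((((strictMonoOn_branch ha hc hv _).mono (Ici_subset_Ici.2 hroots)).add_const _).max
      ((strictMonoOn_branch ha hc hv _).add_const _)).congr
      fun u _ => (objective_eq_max hd u).symm

theorem strictAntiOn_and_strictMonoOn_objective_of_mem_Icc
    (ha : 0 < a) (hc : 0 < c) (hv : 0 < v)
    (h : v0 ∈ Icc (branchRoot a c v (b + d)) (branchRoot a c v (b - d))) :
    StrictAntiOn (objective a c v b d v0) (Ioc 0 v0) ∧
      StrictMonoOn (objective a c v b d v0) (Ici v0) :=
  ⟨(((strictAntiOn_branch ha hc hv _).mono (Ioc_subset_Ioc_right h.2)).add_const _).congr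
      fun _ hu => (objective_eq_of_ge hu.2).symm,
    (((strictMonoOn_branch ha hc hv _).mono (Ici_subset_Ici.2 h.1)).add_const _).congr
      fun _ hu => (objective_eq_of_le hu).symm⟩

end Objective

theorem stmt_6_general (a b c d v0 l v : ℝ) (ha : 0 < a) (hc : 0 < c) (hd : 0 ≤ d)
    (hl : 0 < l) (hv : 0 < v)
    (G : ℝ → ℝ)
    (hG : ∀ u, G u = (1/2) * a * u^2 / v - c * v * Real.log (u / v) + b * u + d * |u - v0|)
    (r1 r2 : ℝ)
    (hr1 : r1 = v * (-(b+d) + Real.sqrt ((b+d)^2 + 4*a*c)) / (2*a))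
    (hr2 : r2 = v * (-(b-d) + Real.sqrt ((b-d)^2 + 4*a*c)) / (2*a))
    (m : ℝ)
    (hm : m = if r1 > v0 then min r1 l else if r2 < v0 then min r2 l else min v0 l) :
    m ∈ Set.Ioc 0 l ∧ IsMinOn G (Set.Ioc 0 l) m ∧
      ∀ u ∈ Set.Ioc (0:ℝ) l, IsMinOn G (Set.Ioc 0 l) u → u = m := by
  obtain rfl : G = objective a c v b d v0 := funext hG
  obtain rfl : r1 = branchRoot a c v (b + d) := hr1
  obtain rfl : r2 = branchRoot a c v (b - d) := hr2
  split_ifs at hm with h1 h2 <;> subst hm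
  · obtain ⟨hanti, hmono⟩ :=
      strictAntiOn_and_strictMonoOn_objective_of_lt_branchRoot ha hc hv hd h1
    exact isMinOn_Ioc_min_of_strictAntiOn_of_strictMonoOn (branchRoot_pos ha hc hv _) hl hanti hmono
  · obtain ⟨hanti, hmono⟩ :=
      strictAntiOn_and_strictMonoOn_objective_of_branchRoot_lt ha hc hv hd h2
    exact isMinOn_Ioc_min_of_strictAntiOn_of_strictMonoOn (branchRoot_pos ha hc hv _) hl hanti hmono
  · have hmem : v0 ∈ Icc (branchRoot a c v (b + d)) (branchRoot a c v (b - d)) :=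
      ⟨not_lt.1 h1, not_lt.1 h2⟩
    obtain ⟨hanti, hmono⟩ := strictAntiOn_and_strictMonoOn_objective_of_mem_Icc ha hc hv hmem
    exact isMinOn_Ioc_min_of_strictAntiOn_of_strictMonoOn
      ((branchRoot_pos ha hc hv _).trans_le hmem.1) hl hanti hmono

theorem stmt_6 (a b c d v0 l v : ℝ) (ha : 0 < a) (hc : 0 < c) (hd : 0 ≤ d)
    (hv0 : 0 ≤ v0) (hl : 0 < l) (hv : 0 < v)
    (G : ℝ → ℝ)
    (hG : ∀ u, G u = (1/2) * a * u^2 / v - c * v * Real.log (u / v) + b * u + d * |u - v0|)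
    (r1 r2 : ℝ)
    (hr1 : r1 = v * (-(b+d) + Real.sqrt ((b+d)^2 + 4*a*c)) / (2*a))
    (hr2 : r2 = v * (-(b-d) + Real.sqrt ((b-d)^2 + 4*a*c)) / (2*a))
    (m : ℝ)
    (hm : m = if r1 > v0 then min r1 l else if r2 < v0 then min r2 l else min v0 l) :
    m ∈ Set.Ioc 0 l ∧ IsMinOn G (Set.Ioc 0 l) m ∧
      ∀ u ∈ Set.Ioc (0:ℝ) l, IsMinOn G (Set.Ioc 0 l) u → u = m :=
  stmt_6_general a b c d v0 l v ha hc hd hl hv G hG r1 r2 hr1 hr2 m hm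
end

section
/- With the substitutions X̃ = √(2n)/√(1+λ₂) · stacked matrix (X·diag(w)⁻¹ ; √λ₂ Σ^{1/2} diag(w)⁻¹), Ỹ = (√(2n)Y ; 0), β̃* = √(1+λ₂) diag(w) β*, λ = λ₁/√(1+λ₂), and Ĩ = ∏_i [√(1+λ₂) w_i s_i, √(1+λ₂) w_i t_i], the ARGEN problem argmin_{β ∈ [s,t]} (‖Y − Xβ‖₂² + λ₁ wᵀ|β| + λ₂ βᵀΣβ) and the rectangle-range lasso argmin_{γ ∈ Ĩ} ((1/(2n))‖Ỹ − X̃γ‖₂² + λ‖γ‖₁) are equivalent: β̂ solves the former if and only if γ̂ = √(1+λ₂) diag(w) β̂ solves the latter. -/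
/-!
The rescaling `γ = √(1 + λ₂) diag(w) β` maps the box `[s, t]` onto the box `Ĩ`, and the lasso
objective at `γ` equals the ARGEN objective at `β`: the first `n` rows of the augmented design
reproduce `‖Y - Xβ‖²`, the last `p` rows reproduce `λ₂ ‖Rβ‖² = λ₂ βᵀ Σ β` because `R` is a
symmetric square root of `Σ`, and the factors `√(2n)` and `√(1 + λ₂)` cancel. Minimisers of the
two problems therefore correspond under the rescaling.
-/

open Matrix

theorem isMinOn_image_iff {α β δ : Type*} [Preorder α] {f : β → α} {g : δ → β} {s : Set δ}
    {b : δ} : IsMinOn f (g '' s) (g b) ↔ IsMinOn (f ∘ g) s b := by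
  simp only [isMinOn_iff, Set.forall_mem_image, Function.comp_apply]

theorem Set.image_piMap_mul_left_univ_pi_Icc {ι K : Type*} [Field K] [LinearOrder K]
    [IsStrictOrderedRing K] {c : ι → K} (hc : ∀ i, 0 < c i) (s t : ι → K) :
    Pi.map (fun i => (c i * ·)) '' univ.pi (fun i => Icc (s i) (t i)) =
      univ.pi (fun i => Icc (c i * s i) (c i * t i)) := by
  simp only [piMap_image_univ_pi, image_mul_left_Icc' (hc _)]

namespace Matrix

variable {m n l : Type*} [Fintype n]

theorem mul_diagonal_inv_mulVec_diagonal_mulVec {K : Type*} [Field K] [DecidableEq n]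
    (M : Matrix m n K) {w : n → K} (hw : ∀ i, w i ≠ 0) (v : n → K) :
    (M * (diagonal w)⁻¹) *ᵥ (diagonal w *ᵥ v) = M *ᵥ v := by
  have hdet : IsUnit (diagonal w).det := by
    simpa [det_diagonal, isUnit_iff_ne_zero, Finset.prod_ne_zero_iff] using hw
  rw [mulVec_mulVec, Matrix.mul_assoc, nonsing_inv_mul _ hdet, Matrix.mul_one]

theorem IsSymm.sum_mulVec_sq {R : Type*} [CommSemiring R] {A : Matrix n n R}
    (hA : A.IsSymm) (v : n → R) : ∑ i, (A *ᵥ v) i ^ 2 = ∑ i, v i * ((A * A) *ᵥ v) i := by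
  simp only [sq]
  change (A *ᵥ v) ⬝ᵥ (A *ᵥ v) = v ⬝ᵥ ((A * A) *ᵥ v)
  rw [dotProduct_mulVec (A *ᵥ v), vecMul_mulVec, hA.eq, dotProduct_mulVec]

theorem sum_sq_sumElim_zero_sub_fromRows_mulVec {R : Type*} [CommRing R] [Fintype m]
    [Fintype l] (y : m → R) (A : Matrix m n R) (B : Matrix l n R) (v : n → R) :
    ∑ i, (Sum.elim y 0 i - (fromRows A B *ᵥ v) i) ^ 2 =
      ∑ j, (y j - (A *ᵥ v) j) ^ 2 + ∑ i, (B *ᵥ v) i ^ 2 := by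
  simp [fromRows_mulVec, Fintype.sum_sum_type]

theorem sum_sq_augmented_residual [Fintype m] [Fintype l] [DecidableEq n] (y : m → ℝ)
    (A : Matrix m n ℝ) (B : Matrix l n ℝ) {w : n → ℝ} (hw : ∀ i, w i ≠ 0) {κ a lam : ℝ}
    (ha : a ≠ 0) (hlam : 0 ≤ lam) (v : n → ℝ) :
    ∑ i, (Sum.elim (fun j => κ * y j) 0 i - (((κ / a) • fromRows (A * (diagonal w)⁻¹)
        (Real.sqrt lam • (B * (diagonal w)⁻¹))) *ᵥ (fun i => a * w i * v i)) i) ^ 2 =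
      κ ^ 2 * (∑ j, (y j - (A *ᵥ v) j) ^ 2 + lam * ∑ i, (B *ᵥ v) i ^ 2) := by
  set M := fromRows A (Real.sqrt lam • B)
  have hγ : (fun i => a * w i * v i) = diagonal w *ᵥ (a • v) := by
    ext i
    rw [mulVec_diagonal, Pi.smul_apply, smul_eq_mul]
    ring
  have hfit : ((κ / a) • fromRows (A * (diagonal w)⁻¹) (Real.sqrt lam • (B * (diagonal w)⁻¹))) *ᵥ
      (fun i => a * w i * v i) = κ • (M *ᵥ v) := by
    rw [hγ, ← Matrix.smul_mul, ← fromRows_mul, smul_mulVec,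
      mul_diagonal_inv_mulVec_diagonal_mulVec _ hw, mulVec_smul, smul_smul, div_mul_cancel₀ _ ha]
  have hres : ∀ i, Sum.elim (fun j => κ * y j) 0 i - (κ • (M *ᵥ v)) i =
      κ * (Sum.elim y 0 i - (M *ᵥ v) i) := by
    rintro (j | i) <;> simp [mul_sub]
  rw [hfit, Finset.sum_congr rfl fun i _ => by rw [hres i, mul_pow], ← Finset.mul_sum,
    sum_sq_sumElim_zero_sub_fromRows_mulVec, smul_mulVec]
  simp only [Pi.smul_apply, smul_eq_mul, mul_pow, Real.sq_sqrt hlam, Finset.mul_sum]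

end Matrix

theorem Finset.sum_abs_const_mul_mul {ι : Type*} (s : Finset ι) {a : ℝ} (ha : 0 ≤ a)
    {w : ι → ℝ} (hw : ∀ i, 0 ≤ w i) (v : ι → ℝ) :
    ∑ i ∈ s, |a * w i * v i| = a * ∑ i ∈ s, w i * |v i| := by
  simp only [abs_mul, abs_of_nonneg ha, abs_of_nonneg (hw _), Finset.mul_sum, mul_assoc]

theorem stmt_18_general (n p : ℕ) (hn : 0 < n)
    (X : Matrix (Fin n) (Fin p) ℝ) (Y : Fin n → ℝ)
    (lam1 lam2 : ℝ) (hlam2 : 0 ≤ lam2)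
    (w : Fin p → ℝ) (hw : ∀ i, 0 < w i)
    (Sig R : Matrix (Fin p) (Fin p) ℝ)
    (hRsym : R.IsSymm) (hRR : R * R = Sig)
    (s t : Fin p → ℝ)
    (f : (Fin p → ℝ) → ℝ)
    (hf : ∀ β, f β = (∑ j, (Y j - (X.mulVec β) j)^2)
      + lam1 * ∑ i, w i * |β i| + lam2 * ∑ i, β i * (Sig.mulVec β) i)
    (Xt : Matrix (Fin n ⊕ Fin p) (Fin p) ℝ)
    (hXt : Xt = (Real.sqrt (2 * n) / Real.sqrt (1 + lam2)) •
      Matrix.fromRows (X * (Matrix.diagonal w)⁻¹)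
        (Real.sqrt lam2 • (R * (Matrix.diagonal w)⁻¹)))
    (Yt : Fin n ⊕ Fin p → ℝ)
    (hYt : Yt = Sum.elim (fun j => Real.sqrt (2 * n) * Y j) 0)
    (lam : ℝ) (hlam : lam = lam1 / Real.sqrt (1 + lam2))
    (L : (Fin p → ℝ) → ℝ)
    (hL : ∀ γ, L γ = (1 / (2 * (n : ℝ))) * (∑ i, (Yt i - (Xt.mulVec γ) i)^2)
      + lam * ∑ i, |γ i|)
    (S : Set (Fin p → ℝ)) (hS : S = {β | ∀ i, β i ∈ Set.Icc (s i) (t i)})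
    (St : Set (Fin p → ℝ))
    (hSt : St = {γ | ∀ i, γ i ∈ Set.Icc (Real.sqrt (1 + lam2) * w i * s i)
      (Real.sqrt (1 + lam2) * w i * t i)}) :
    ∀ βhat ∈ S,
      (IsMinOn f S βhat ↔
        IsMinOn L St (fun i => Real.sqrt (1 + lam2) * w i * βhat i)) := by
  intro βhat _
  have ha : 0 < Real.sqrt (1 + lam2) := Real.sqrt_pos.2 (by linarith)
  have hbox : ∀ u v : Fin p → ℝ, {β | ∀ i, β i ∈ Set.Icc (u i) (v i)} =
      Set.univ.pi fun i => Set.Icc (u i) (v i) := fun _ _ => Set.ext fun _ => Set.mem_univ_pi.symm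
  have hSt' : St = Pi.map (fun i => (Real.sqrt (1 + lam2) * w i * ·)) '' S := by
    rw [hSt, hS, hbox, hbox, Set.image_piMap_mul_left_univ_pi_Icc fun i => mul_pos ha (hw i)]
  have hobj : L ∘ Pi.map (fun i => (Real.sqrt (1 + lam2) * w i * ·)) = f := by
    funext β
    show L (fun i => Real.sqrt (1 + lam2) * w i * β i) = f β
    rw [hL, hf, hYt, hXt, hlam, ← hRR, ← hRsym.sum_mulVec_sq,
      sum_sq_augmented_residual _ _ _ (fun i => (hw i).ne') ha.ne' hlam2,
      Finset.sum_abs_const_mul_mul _ ha.le (fun i => (hw i).le), Real.sq_sqrt (by positivity)]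
    field_simp
    ring
  rw [hSt', ← hobj]
  exact isMinOn_image_iff.symm

theorem stmt_18 (n p : ℕ) (hn : 0 < n)
    (X : Matrix (Fin n) (Fin p) ℝ) (Y : Fin n → ℝ)
    (lam1 lam2 : ℝ) (hlam1 : 0 < lam1) (hlam2 : 0 ≤ lam2)
    (w : Fin p → ℝ) (hw : ∀ i, 0 < w i)
    (Sig R : Matrix (Fin p) (Fin p) ℝ) (hSig : Sig.PosSemidef)
    (hRsym : R.IsSymm) (hRR : R * R = Sig)
    (s t : Fin p → ℝ) (hst : ∀ i, s i < t i)
    (f : (Fin p → ℝ) → ℝ)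
    (hf : ∀ β, f β = (∑ j, (Y j - (X.mulVec β) j)^2)
      + lam1 * ∑ i, w i * |β i| + lam2 * ∑ i, β i * (Sig.mulVec β) i)
    (Xt : Matrix (Fin n ⊕ Fin p) (Fin p) ℝ)
    (hXt : Xt = (Real.sqrt (2 * n) / Real.sqrt (1 + lam2)) •
      Matrix.fromRows (X * (Matrix.diagonal w)⁻¹)
        (Real.sqrt lam2 • (R * (Matrix.diagonal w)⁻¹)))
    (Yt : Fin n ⊕ Fin p → ℝ)
    (hYt : Yt = Sum.elim (fun j => Real.sqrt (2 * n) * Y j) 0)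
    (lam : ℝ) (hlam : lam = lam1 / Real.sqrt (1 + lam2))
    (L : (Fin p → ℝ) → ℝ)
    (hL : ∀ γ, L γ = (1 / (2 * (n : ℝ))) * (∑ i, (Yt i - (Xt.mulVec γ) i)^2)
      + lam * ∑ i, |γ i|)
    (S : Set (Fin p → ℝ)) (hS : S = {β | ∀ i, β i ∈ Set.Icc (s i) (t i)})
    (St : Set (Fin p → ℝ))
    (hSt : St = {γ | ∀ i, γ i ∈ Set.Icc (Real.sqrt (1 + lam2) * w i * s i)
      (Real.sqrt (1 + lam2) * w i * t i)}) :
    ∀ βhat ∈ S,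
      (IsMinOn f S βhat ↔
        IsMinOn L St (fun i => Real.sqrt (1 + lam2) * w i * βhat i)) :=
  stmt_18_general n p hn X Y lam1 lam2 hlam2 w hw Sig R hRsym hRR s t f hf Xt hXt Yt hYt lam hlam L
    hL S hS St hSt
end
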